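/- arXiv:2103.12372 — 2 statements merged into one kernel-verified Lean document; each statement's English description precedes it below -/
import Mathlib

section
/- The higher-dimensional guiding vector field χ(ξ) = ×(∇φ_1,...,∇φ_n) − Σ_{i=1}^n k_i φ_i(ξ) ∇φ_i(ξ), with φ_j(ξ) = x_j − f_j(w) and k_i > 0, has no singular points: χ(ξ) ≠ 0 for all ξ ∈ R^{n+1}. In particular, the last component of ×(∇φ_1,...,∇φ_n) equals (−1)^n (up to sign convention), so the (n+1)-th component of χ equals (−1)^n + Σ_{l=1}^n k_l φ_l(ξ) f_l'(w), and the first n components equal (−1)^n f_j'(w) − k_j φ_j(ξ); these cannot all vanish simultaneously. -/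
/-!
If the first `n` components of `χ` vanish, then `k_l φ_l = (-1)^n f_l'(w)` for every `l`, and the
last component collapses to `(-1)^n (1 + Σ_l f_l'(w)^2)`, which is never zero.
-/

theorem add_sum_mul_eq_mul_one_add_sum_sq {ι : Type*} [Fintype ι] {s : ℝ} {u d : ι → ℝ}
    (h : ∀ j, s * d j - u j = 0) : s + ∑ l, u l * d l = s * (1 + ∑ l, d l ^ 2) := by
  have hu : ∀ l, u l * d l = s * d l ^ 2 := fun l => by
    rw [← sub_eq_zero.mp (h l)]; ring
  rw [Finset.sum_congr rfl fun l _ => hu l, ← Finset.mul_sum, mul_add, mul_one]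

theorem add_sum_mul_ne_zero {ι : Type*} [Fintype ι] {s : ℝ} (hs : s ≠ 0) {u d : ι → ℝ}
    (h : ∀ j, s * d j - u j = 0) : s + ∑ l, u l * d l ≠ 0 := by
  rw [add_sum_mul_eq_mul_one_add_sum_sq h]
  exact mul_ne_zero hs (by positivity)

theorem guiding_vector_field_nonsingular_general (n : ℕ) (f : Fin n → ℝ → ℝ)
    (k : Fin n → ℝ) (ξ : Fin (n + 1) → ℝ) :
    (Fin.snoc
      (fun j : Fin n => (-1 : ℝ) ^ n * deriv (f j) (ξ (Fin.last n)) -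
        k j * (ξ (Fin.castSucc j) - f j (ξ (Fin.last n))))
      ((-1 : ℝ) ^ n + ∑ l : Fin n,
        k l * (ξ (Fin.castSucc l) - f l (ξ (Fin.last n))) *
          deriv (f l) (ξ (Fin.last n))) : Fin (n + 1) → ℝ) ≠ 0 := by
  intro hχ
  have hfirst : ∀ j : Fin n, (-1 : ℝ) ^ n * deriv (f j) (ξ (Fin.last n)) -
      k j * (ξ (Fin.castSucc j) - f j (ξ (Fin.last n))) = 0 := fun j => by
    simpa using congrFun hχ (Fin.castSucc j)
  have hlast := congrFun hχ (Fin.last n)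
  rw [Fin.snoc_last] at hlast
  exact add_sum_mul_ne_zero (pow_ne_zero n (neg_ne_zero.mpr one_ne_zero)) hfirst hlast

/-- The higher-dimensional guiding vector field
`χ(ξ) = ×(∇φ_1,…,∇φ_n) − Σ k_i φ_i(ξ) ∇φ_i(ξ)`, whose components are
`χ_j(ξ) = (−1)^n f_j'(w) − k_j φ_j(ξ)` for `j ≤ n` and
`χ_{n+1}(ξ) = (−1)^n + Σ_l k_l φ_l(ξ) f_l'(w)` (where `φ_j(ξ) = x_j − f_j(w)`),
has no singular points: `χ(ξ) ≠ 0` for all `ξ ∈ ℝ^(n+1)`. -/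
theorem guiding_vector_field_nonsingular (n : ℕ) (f : Fin n → ℝ → ℝ)
    (hf : ∀ j, ContDiff ℝ 2 (f j)) (k : Fin n → ℝ) (hk : ∀ j, 0 < k j)
    (ξ : Fin (n + 1) → ℝ) :
    (Fin.snoc
      (fun j : Fin n => (-1 : ℝ) ^ n * deriv (f j) (ξ (Fin.last n)) -
        k j * (ξ (Fin.castSucc j) - f j (ξ (Fin.last n))))
      ((-1 : ℝ) ^ n + ∑ l : Fin n,
        k l * (ξ (Fin.castSucc l) - f l (ξ (Fin.last n))) *
          deriv (f l) (ξ (Fin.last n))) : Fin (n + 1) → ℝ) ≠ 0 :=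
  guiding_vector_field_nonsingular_general n f k ξ
end

section
/- Orientation alignment under saturated control: let σ : [0,∞) → (−π, π) be a C^1 solution of σ̇ = Sat_a^b(θ̇^d − k sin σ) − θ̇^d, where k > 0, a < 0 < b, and assume (i) whenever the argument exceeds b (upper saturation) we have σ ∈ [0, π), and (ii) whenever the argument is below a (lower saturation) we have σ ∈ (−π, 0]. Then V(σ) = 1 − cos σ is nonincreasing along the solution, and σ(t) → 0 as t → ∞. -/
/-!
Along the solution `V = 1 - cos σ` has derivative `sin σ · σ̇`, and `σ̇ = (Sat(u) - u) - k sin σ`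
with `u = θ̇ᵈ - k sin σ`. Saturation moves `u` down only when `σ ∈ [0, π)` and up only when
`σ ∈ (−π, 0]`, so `sin σ · (Sat(u) - u) ≤ 0` and `V̇ ≤ -k sin² σ ≤ 0`. Since
`sin² σ = V (1 + cos σ)` and `cos σ(t) ≥ cos σ(0) > -1` by monotonicity of `V`, this gives
`V̇ ≤ -k (1 + cos σ(0)) V`, so `V` decays exponentially; as `|σ| < π`, `|σ| = arccos (1 - V) → 0`.
-/

open Real Set Filter Topology

theorem mul_max_min_sub_nonpos {a b u s : ℝ} (hupper : b < u → 0 ≤ s) (hlower : u < a → s ≤ 0) :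
    s * (max a (min b u) - u) ≤ 0 := by
  rcases lt_trichotomy (max a (min b u)) u with h | h | h
  · have hbu : b < u := min_lt_iff.1 ((le_max_right a _).trans_lt h) |>.resolve_right (lt_irrefl u)
    exact mul_nonpos_of_nonneg_of_nonpos (hupper hbu) (by linarith)
  · simp [h]
  · have hua : u < a := lt_max_iff.1 h |>.resolve_right (min_le_right b u).not_gt
    exact mul_nonpos_of_nonpos_of_nonneg (hlower hua) (by linarith)

theorem antitoneOn_Ici_of_hasDerivAt_nonpos {f f' : ℝ → ℝ} {a : ℝ}
    (hf : ∀ x, a ≤ x → HasDerivAt f (f' x) x) (hf' : ∀ x, a ≤ x → f' x ≤ 0) :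
    AntitoneOn f (Ici a) := by
  refine antitoneOn_of_hasDerivWithinAt_nonpos (f' := f') (convex_Ici a)
    (fun x hx => (hf x hx).continuousAt.continuousWithinAt) (fun x hx => ?_) (fun x hx => ?_)
  all_goals rw [interior_Ici] at hx
  exacts [(hf x hx.le).hasDerivWithinAt, hf' x hx.le]

theorem le_mul_exp_of_hasDerivAt_le_neg_mul {f f' : ℝ → ℝ} {a c : ℝ}
    (hf : ∀ x, a ≤ x → HasDerivAt f (f' x) x) (hbound : ∀ x, a ≤ x → f' x ≤ -c * f x)
    {t : ℝ} (ht : a ≤ t) : f t ≤ f a * exp (-c * (t - a)) := by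
  have := le_gronwallBound_of_liminf_deriv_right_le (f' := f') (δ := f a) (K := -c) (ε := 0)
    (b := t) (fun x hx => (hf x hx.1).continuousAt.continuousWithinAt)
    (fun x hx _ hr => (hf x hx.1).hasDerivWithinAt.liminf_right_slope_le hr) le_rfl
    (fun x hx => by simpa using hbound x hx.1) t ⟨ht, le_rfl⟩
  rwa [gronwallBound_ε0] at this

theorem tendsto_zero_of_hasDerivAt_le_neg_mul {f f' : ℝ → ℝ} {a c : ℝ} (hc : 0 < c)
    (hf : ∀ x, a ≤ x → HasDerivAt f (f' x) x) (hbound : ∀ x, a ≤ x → f' x ≤ -c * f x)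
    (hnonneg : ∀ x, a ≤ x → 0 ≤ f x) : Tendsto f atTop (𝓝 0) := by
  have hexp : Tendsto (fun t => f a * exp (-c * (t - a))) atTop (𝓝 0) := by
    have hlin : Tendsto (fun t => -c * (t - a)) atTop atBot :=
      (tendsto_atTop_add_const_right atTop (-a) tendsto_id).const_mul_atTop_of_neg
        (neg_lt_zero.2 hc)
    simpa using (tendsto_exp_atBot.comp hlin).const_mul (f a)
  refine squeeze_zero' ?_ ?_ hexp
  all_goals filter_upwards [eventually_ge_atTop a] with t ht
  exacts [hnonneg t ht, le_mul_exp_of_hasDerivAt_le_neg_mul hf hbound ht]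

theorem tendsto_zero_of_tendsto_cos_one {α : Type*} {l : Filter α} {x : α → ℝ}
    (hx : ∀ᶠ i in l, |x i| ≤ π) (hcos : Tendsto (fun i => cos (x i)) l (𝓝 1)) :
    Tendsto x l (𝓝 0) := by
  rw [tendsto_zero_iff_abs_tendsto_zero]
  have harccos : Tendsto (fun i => arccos (cos (x i))) l (𝓝 0) :=
    arccos_one ▸ (continuous_arccos.tendsto 1).comp hcos
  refine harccos.congr' ?_
  filter_upwards [hx] with i hi
  rw [← cos_abs, arccos_cos (abs_nonneg _) hi]
  rfl

theorem neg_one_lt_cos_of_abs_lt_pi {x : ℝ} (hx : |x| < π) : -1 < cos x := by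
  simpa [cos_abs] using cos_lt_cos_of_nonneg_of_le_pi (abs_nonneg x) le_rfl hx

theorem saturated_alignment_convergence_general (k a b : ℝ) (hk : 0 < k)
    (θd : ℝ → ℝ) (σ : ℝ → ℝ)
    (hrange : ∀ t, 0 ≤ t → σ t ∈ Set.Ioo (-Real.pi) Real.pi)
    (hode : ∀ t, 0 ≤ t → HasDerivAt σ
      (max a (min b (θd t - k * Real.sin (σ t))) - θd t) t)
    (hupper : ∀ t, 0 ≤ t → b < θd t - k * Real.sin (σ t) →
      σ t ∈ Set.Ico 0 Real.pi)
    (hlower : ∀ t, 0 ≤ t → θd t - k * Real.sin (σ t) < a →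
      σ t ∈ Set.Ioc (-Real.pi) 0) :
    (∀ s t, 0 ≤ s → s ≤ t →
      1 - Real.cos (σ t) ≤ 1 - Real.cos (σ s)) ∧
    Filter.Tendsto σ Filter.atTop (nhds 0) := by
  set V : ℝ → ℝ := fun t => 1 - cos (σ t) with hV
  set V' : ℝ → ℝ := fun t => sin (σ t) * (max a (min b (θd t - k * sin (σ t))) - θd t)
  have hV' : ∀ t, 0 ≤ t → HasDerivAt V (V' t) t := fun t ht => by
    simpa using ((hode t ht).cos.const_sub 1)
  have hV'_le : ∀ t, 0 ≤ t → V' t ≤ -k * sin (σ t) ^ 2 := fun t ht => by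
    have := mul_max_min_sub_nonpos (s := sin (σ t))
      (fun h => sin_nonneg_of_nonneg_of_le_pi (hupper t ht h).1 (hupper t ht h).2.le)
      (fun h => sin_nonpos_of_nonpos_of_neg_pi_le (hlower t ht h).2 (hlower t ht h).1.le)
    linear_combination this
  have hanti : AntitoneOn V (Ici 0) := antitoneOn_Ici_of_hasDerivAt_nonpos hV' fun t ht =>
    (hV'_le t ht).trans (by nlinarith [sq_nonneg (sin (σ t))])
  refine ⟨fun s t hs hst => hanti hs (hs.trans hst) hst, ?_⟩
  have habs : ∀ t, 0 ≤ t → |σ t| < π := fun t ht => abs_lt.2 (hrange t ht)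
  have hc : 0 < k * (1 + cos (σ 0)) :=
    mul_pos hk (by linarith [neg_one_lt_cos_of_abs_lt_pi (habs 0 le_rfl)])
  have hdecay : ∀ t, 0 ≤ t → V' t ≤ -(k * (1 + cos (σ 0))) * V t := fun t ht => by
    have hcos : cos (σ 0) ≤ cos (σ t) := by linarith [hanti self_mem_Ici ht ht]
    nlinarith [hV'_le t ht, sin_sq_add_cos_sq (σ t),
      mul_nonneg (mul_nonneg hk.le (sub_nonneg.2 (cos_le_one (σ t)))) (sub_nonneg.2 hcos)]
  have hV0 : Tendsto V atTop (𝓝 0) :=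
    tendsto_zero_of_hasDerivAt_le_neg_mul hc hV' hdecay fun t _ => by linarith [cos_le_one (σ t)]
  have hcos : Tendsto (fun t => cos (σ t)) atTop (𝓝 1) := by
    simpa [hV] using (tendsto_const_nhds (x := 1)).sub hV0
  refine tendsto_zero_of_tendsto_cos_one ?_ hcos
  filter_upwards [eventually_ge_atTop 0] with t ht using (habs t ht).le

/-- Orientation alignment under saturated control: if `σ : [0,∞) → (−π, π)` solves
`σ̇ = Sat_a^b(θ̇ᵈ − k sin σ) − θ̇ᵈ` with `k > 0`, `a < 0 < b`, and `σ ∈ [0, π)`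
during upper saturation while `σ ∈ (−π, 0]` during lower saturation, then
`V(σ) = 1 − cos σ` is nonincreasing along the solution and `σ(t) → 0` as `t → ∞`. -/
theorem saturated_alignment_convergence (k a b : ℝ) (hk : 0 < k)
    (ha : a < 0) (hb : 0 < b) (θd : ℝ → ℝ) (hθd : Continuous θd) (σ : ℝ → ℝ)
    (hrange : ∀ t, 0 ≤ t → σ t ∈ Set.Ioo (-Real.pi) Real.pi)
    (hode : ∀ t, 0 ≤ t → HasDerivAt σ
      (max a (min b (θd t - k * Real.sin (σ t))) - θd t) t)
    (hupper : ∀ t, 0 ≤ t → b < θd t - k * Real.sin (σ t) →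
      σ t ∈ Set.Ico 0 Real.pi)
    (hlower : ∀ t, 0 ≤ t → θd t - k * Real.sin (σ t) < a →
      σ t ∈ Set.Ioc (-Real.pi) 0) :
    (∀ s t, 0 ≤ s → s ≤ t →
      1 - Real.cos (σ t) ≤ 1 - Real.cos (σ s)) ∧
    Filter.Tendsto σ Filter.atTop (nhds 0) :=
  saturated_alignment_convergence_general k a b hk θd σ hrange hode hupper hlower
end
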